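/- If in a braid word β the classical crossings x, x' form a bigon and x, x'' also form a bigon (sharing the crossing x), then the braid words β' and β'' obtained by the two respective bigon reductions are strongly equivalent. -/

import Mathlib

set_option maxHeartbeats 1000000

namespace OneTermBracket

/-- Letters (generators) of free braid words on `n` strands:
`zeta i` is a classical crossing, `tau i` a virtual crossing, `1 ≤ i+1 ≤ n-1`. -/
inductive Letter (n : ℕ) where
  | zeta (i : Fin (n-1))
  | tau  (i : Fin (n-1))
deriving DecidableEq

namespace Letter

def idx {n : ℕ} : Letter n → Fin (n-1)
  | zeta i => i
  | tau i => i

def isZeta {n : ℕ} : Letter n → Bool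
  | zeta _ => true
  | tau _ => false

end Letter

def lo {n : ℕ} (i : Fin (n-1)) : Fin n := ⟨i.1, by have := i.2; omega⟩
def hi {n : ℕ} (i : Fin (n-1)) : Fin n := ⟨i.1 + 1, by have := i.2; omega⟩

/-- The transposition `(i, i+1)` of `{1, …, n}`. -/
def sPerm {n : ℕ} (i : Fin (n-1)) : Equiv.Perm (Fin n) := Equiv.swap (lo i) (hi i)

/-- Each letter acts on positions as the transposition `(i, i+1)`. -/
def transOf {n : ℕ} (g : Letter n) : Equiv.Perm (Fin n) := sPerm g.idx

/-- The permutation realized by the prefix of length `j` of a braid word,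
mapping the top label of a strand to its position at level `j`. -/
def prefPerm {n : ℕ} (w : List (Letter n)) (j : ℕ) : Equiv.Perm (Fin n) :=
  (((w.take j).map transOf).reverse).prod

/-- The permutation `P(β)` of a braid word (top endpoint `k` goes to bottom endpoint `P k`). -/
def permOf {n : ℕ} (w : List (Letter n)) : Equiv.Perm (Fin n) :=
  ((w.map transOf).reverse).prod

/-- The unordered pair of (top labels of the) strands crossing at position `j` of `w`. -/
def strandsAt {n : ℕ} (w : List (Letter n)) (j : ℕ) : Option (Sym2 (Fin n)) :=
  (w[j]?).map fun g => s((prefPerm w j)⁻¹ (lo g.idx), (prefPerm w j)⁻¹ (hi g.idx))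

/-- Component-wise parity determined by a partition `{1,…,n} = N₁ ⊔ N₂` (encoded by
`c : Fin n → Bool`): a classical crossing is odd (`1`) iff its two strands lie in
different parts. Non-classical positions get `0`. -/
def cwParity {n : ℕ} (c : Fin n → Bool) (w : List (Letter n)) (j : ℕ) : ZMod 2 :=
  match w[j]? with
  | some (.zeta i) =>
      if c ((prefPerm w j)⁻¹ (lo i)) = c ((prefPerm w j)⁻¹ (hi i)) then 0 else 1
  | _ => 0

/-- The defining relations of `F_n` and `FB_n` which do not involve
`ζ_i² = 1` or the classical third Reidemeister move ("strong" moves). -/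
inductive RelStrong (n : ℕ) : List (Letter n) → List (Letter n) → Prop
  | tt (i : Fin (n-1)) : RelStrong n [.tau i, .tau i] []
  | virt (i : Fin (n-1)) : RelStrong n [.zeta i, .tau i] [.tau i, .zeta i]
  | far_zz (i j : Fin (n-1)) (h : 2 ≤ Nat.dist i j) :
      RelStrong n [.zeta i, .zeta j] [.zeta j, .zeta i]
  | far_zt (i j : Fin (n-1)) (h : 2 ≤ Nat.dist i j) :
      RelStrong n [.zeta i, .tau j] [.tau j, .zeta i]
  | far_tt (i j : Fin (n-1)) (h : 2 ≤ Nat.dist i j) :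
      RelStrong n [.tau i, .tau j] [.tau j, .tau i]
  | r3v (i j : Fin (n-1)) (h : (j:ℕ) = (i:ℕ) + 1) :
      RelStrong n [.tau i, .tau j, .tau i] [.tau j, .tau i, .tau j]
  | semi (i j : Fin (n-1)) (h : (j:ℕ) = (i:ℕ) + 1) :
      RelStrong n [.tau i, .tau j, .zeta i] [.zeta j, .tau i, .tau j]

/-- The defining relations of `F_n`. -/
inductive RelF (n : ℕ) : List (Letter n) → List (Letter n) → Prop
  | strong {r1 r2} : RelStrong n r1 r2 → RelF n r1 r2
  | zz (i : Fin (n-1)) : RelF n [.zeta i, .zeta i] []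

/-- The defining relations of the free braid group `FB_n`. -/
inductive RelFB (n : ℕ) : List (Letter n) → List (Letter n) → Prop
  | ofF {r1 r2} : RelF n r1 r2 → RelFB n r1 r2
  | r3c (i j : Fin (n-1)) (h : (j:ℕ) = (i:ℕ) + 1) :
      RelFB n [.zeta i, .zeta j, .zeta i] [.zeta j, .zeta i, .zeta j]

/-- One application of a relation from `R` inside a word. -/
def StepOf {n : ℕ} (R : List (Letter n) → List (Letter n) → Prop)
    (w1 w2 : List (Letter n)) : Prop :=
  ∃ A B r1 r2, R r1 r2 ∧ w1 = A ++ r1 ++ B ∧ w2 = A ++ r2 ++ B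

/-- Strong equivalence: all moves of `F_n` except `ζ_i² = 1`. -/
def StrongEq {n : ℕ} (w1 w2 : List (Letter n)) : Prop :=
  Relation.EqvGen (StepOf (RelStrong n)) w1 w2

/-- Equivalence of braid words as elements of `F_n`. -/
def EqF {n : ℕ} (w1 w2 : List (Letter n)) : Prop :=
  Relation.EqvGen (StepOf (RelF n)) w1 w2

/-- Equivalence of braid words as elements of the free braid group `FB_n`. -/
def EqFB {n : ℕ} (w1 w2 : List (Letter n)) : Prop :=
  Relation.EqvGen (StepOf (RelFB n)) w1 w2

/-- The parity axioms, for a parity `P` defined on the class `C` of braid words.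
`P w j` is the parity of the crossing at position `j` of `w` (only classical
positions matter). -/
structure IsParity {n : ℕ} (C : List (Letter n) → Prop)
    (P : List (Letter n) → ℕ → ZMod 2) : Prop where
  /-- Crossings not taking part in a relation keep their parity (part before). -/
  untouched_left : ∀ A B r1 r2, RelFB n r1 r2 →
    C (A ++ r1 ++ B) → C (A ++ r2 ++ B) → ∀ j < A.length,
    P (A ++ r1 ++ B) j = P (A ++ r2 ++ B) j
  /-- Crossings not taking part in a relation keep their parity (part after). -/
  untouched_right : ∀ A B r1 r2, RelFB n r1 r2 →
    C (A ++ r1 ++ B) → C (A ++ r2 ++ B) → ∀ j < B.length,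
    P (A ++ r1 ++ B) (A.length + r1.length + j) = P (A ++ r2 ++ B) (A.length + r2.length + j)
  /-- In commutation-type relations (far commutativity, virtualization), the two
  letters keep their parities. -/
  comm : ∀ A B x y, RelFB n [x, y] [y, x] →
    C (A ++ [x, y] ++ B) → C (A ++ [y, x] ++ B) →
    P (A ++ [x, y] ++ B) A.length = P (A ++ [y, x] ++ B) (A.length + 1) ∧
    P (A ++ [x, y] ++ B) (A.length + 1) = P (A ++ [y, x] ++ B) A.length
  /-- In a classical second Reidemeister move both crossings have the same parity. -/
  r2c : ∀ A B (i : Fin (n-1)),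
    C (A ++ [.zeta i, .zeta i] ++ B) → C (A ++ B) →
    P (A ++ [.zeta i, .zeta i] ++ B) A.length
      = P (A ++ [.zeta i, .zeta i] ++ B) (A.length + 1)
  /-- In a semivirtual move, the classical crossing keeps its parity. -/
  semiv : ∀ A B (i j : Fin (n-1)), (j:ℕ) = (i:ℕ) + 1 →
    C (A ++ [.tau i, .tau j, .zeta i] ++ B) →
    C (A ++ [.zeta j, .tau i, .tau j] ++ B) →
    P (A ++ [.tau i, .tau j, .zeta i] ++ B) (A.length + 2)
      = P (A ++ [.zeta j, .tau i, .tau j] ++ B) A.length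
  /-- In a classical third Reidemeister move the number of odd crossings is even. -/
  r3_even : ∀ A B (i j : Fin (n-1)), (j:ℕ) = (i:ℕ) + 1 →
    C (A ++ [.zeta i, .zeta j, .zeta i] ++ B) →
    C (A ++ [.zeta j, .zeta i, .zeta j] ++ B) →
    P (A ++ [.zeta i, .zeta j, .zeta i] ++ B) A.length
      + P (A ++ [.zeta i, .zeta j, .zeta i] ++ B) (A.length + 1)
      + P (A ++ [.zeta i, .zeta j, .zeta i] ++ B) (A.length + 2) = 0
  /-- In a classical third Reidemeister move, upper/middle/lower crossings on the
  left correspond to lower/middle/upper crossings on the right with equal parities. -/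
  r3_corr : ∀ A B (i j : Fin (n-1)), (j:ℕ) = (i:ℕ) + 1 →
    C (A ++ [.zeta i, .zeta j, .zeta i] ++ B) →
    C (A ++ [.zeta j, .zeta i, .zeta j] ++ B) →
    P (A ++ [.zeta i, .zeta j, .zeta i] ++ B) A.length
      = P (A ++ [.zeta j, .zeta i, .zeta j] ++ B) (A.length + 2) ∧
    P (A ++ [.zeta i, .zeta j, .zeta i] ++ B) (A.length + 1)
      = P (A ++ [.zeta j, .zeta i, .zeta j] ++ B) (A.length + 1) ∧
    P (A ++ [.zeta i, .zeta j, .zeta i] ++ B) (A.length + 2)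
      = P (A ++ [.zeta j, .zeta i, .zeta j] ++ B) A.length

/-- Delete from `w` all classical letters whose parity (given by `par`) is even. -/
def deleteEven {n : ℕ} (w : List (Letter n)) (par : ℕ → ZMod 2) : List (Letter n) :=
  (List.range w.length).filterMap fun j =>
    (w[j]?).bind fun g =>
      match g with
      | .zeta i => if par j = 0 then none else some (.zeta i)
      | .tau i => some (.tau i)

/-- The one-term parity bracket: delete all even classical crossings. -/
def bracket {n : ℕ} (P : List (Letter n) → ℕ → ZMod 2) (w : List (Letter n)) :
    List (Letter n) :=
  deleteEven w (P w)

/-- Positions of classical crossings of a word. -/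
def ZetaPos {n : ℕ} (w : List (Letter n)) : Set ℕ :=
  {j | ∃ i, w[j]? = some (Letter.zeta i)}

/-- The classical crossings at positions `j1 < j2` form a bigon: they lie on the same
pair of strands, and no classical crossing between them lies on either of those strands. -/
def IsBigon {n : ℕ} (w : List (Letter n)) (j1 j2 : ℕ) : Prop :=
  j1 < j2 ∧ j1 ∈ ZetaPos w ∧ j2 ∈ ZetaPos w ∧
  strandsAt w j1 = strandsAt w j2 ∧
  ∀ k, j1 < k → k < j2 → k ∈ ZetaPos w →
    ∀ e e', strandsAt w j1 = some e → strandsAt w k = some e' → ∀ a ∈ e, a ∉ e'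

/-- Delete the letters at two given positions. -/
def delete2 {n : ℕ} (w : List (Letter n)) (j1 j2 : ℕ) : List (Letter n) :=
  (w.eraseIdx (max j1 j2)).eraseIdx (min j1 j2)

/-- One bigon reduction. -/
def BigonStep {n : ℕ} (w w' : List (Letter n)) : Prop :=
  ∃ j1 j2, IsBigon w j1 j2 ∧ w' = delete2 w j1 j2

/-- A word is irreducible if it admits no bigon reduction. -/
def Irreducible {n : ℕ} (w : List (Letter n)) : Prop := ¬ ∃ j1 j2, IsBigon w j1 j2

/-- Number of classical letters of a word. -/
def countZeta {n : ℕ} (w : List (Letter n)) : ℕ := (w.filter Letter.isZeta).length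

/-- `φ` is an isomorphism of the decorated graphs `Γ(w1) ≅ Γ(w2)`, encoded
combinatorially: a bijection of classical crossings preserving the pair of strands
through each crossing, the order of crossings along each strand, and the endpoint
structure (the permutation). -/
structure IsGammaIso {n : ℕ} (w1 w2 : List (Letter n)) (φ : ℕ → ℕ) : Prop where
  maps : ∀ j ∈ ZetaPos w1, φ j ∈ ZetaPos w2
  inj : ∀ j ∈ ZetaPos w1, ∀ j' ∈ ZetaPos w1, φ j = φ j' → j = j'
  surj : ∀ k ∈ ZetaPos w2, ∃ j ∈ ZetaPos w1, φ j = k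
  strands : ∀ j ∈ ZetaPos w1, strandsAt w2 (φ j) = strandsAt w1 j
  order : ∀ j ∈ ZetaPos w1, ∀ j' ∈ ZetaPos w1, j < j' →
    (∃ e e' a, strandsAt w1 j = some e ∧ strandsAt w1 j' = some e' ∧ a ∈ e ∧ a ∈ e') →
    φ j < φ j'
  perm : permOf w1 = permOf w2

/-! ### The groups `F_n` and `FB_n` as presented groups -/

/-- Generators: `Sum.inl i` is the classical generator `ζ_i`,
`Sum.inr i` is the virtual generator `τ_i`. -/
abbrev GGen (n : ℕ) := Fin (n-1) ⊕ Fin (n-1)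

def zg {n : ℕ} (i : Fin (n-1)) : FreeGroup (GGen n) := FreeGroup.of (Sum.inl i)
def tg {n : ℕ} (i : Fin (n-1)) : FreeGroup (GGen n) := FreeGroup.of (Sum.inr i)

/-- The relators of `F_n`. -/
def FRels (n : ℕ) : Set (FreeGroup (GGen n)) :=
  (⋃ i, {zg i * zg i}) ∪ (⋃ i, {tg i * tg i}) ∪
  (⋃ i, {zg i * tg i * (tg i * zg i)⁻¹}) ∪
  (⋃ (i : Fin (n-1)) (j : Fin (n-1)) (_ : 2 ≤ Nat.dist i j),
    {zg i * zg j * (zg j * zg i)⁻¹, zg i * tg j * (tg j * zg i)⁻¹,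
     tg i * tg j * (tg j * tg i)⁻¹}) ∪
  (⋃ (i : Fin (n-1)) (j : Fin (n-1)) (_ : (j:ℕ) = (i:ℕ) + 1),
    {tg i * tg j * tg i * (tg j * tg i * tg j)⁻¹,
     tg i * tg j * zg i * (zg j * tg i * tg j)⁻¹})

/-- The relators of `FB_n`: those of `F_n` together with the classical third
Reidemeister relation. -/
def FBRels (n : ℕ) : Set (FreeGroup (GGen n)) :=
  FRels n ∪
  (⋃ (i : Fin (n-1)) (j : Fin (n-1)) (_ : (j:ℕ) = (i:ℕ) + 1),
    {zg i * zg j * zg i * (zg j * zg i * zg j)⁻¹})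

/-- The group `F_n`. -/
abbrev FGrp (n : ℕ) := PresentedGroup (FRels n)

/-- The free braid group `FB_n`. -/
abbrev FBGrp (n : ℕ) := PresentedGroup (FBRels n)

def zF {n : ℕ} (i : Fin (n-1)) : FGrp n := PresentedGroup.of (Sum.inl i)
def tF {n : ℕ} (i : Fin (n-1)) : FGrp n := PresentedGroup.of (Sum.inr i)

/-- Evaluation of a braid word in `F_n`. -/
def evalF {n : ℕ} (w : List (Letter n)) : FGrp n :=
  (w.map fun g => match g with
    | Letter.zeta i => zF i
    | Letter.tau i => tF i).prod

/-- For each unordered pair of strands, the mod-2 number of classical letters of `w`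
at which these two strands cross (strand labels traced from the top). -/
def crossPar {n : ℕ} : List (Letter n) → Sym2 (Fin n) → ZMod 2
  | [], _ => 0
  | g :: rest, e =>
    (match g with
     | Letter.zeta i => if e = s(lo i, hi i) then (1 : ZMod 2) else 0
     | Letter.tau _ => 0) + crossPar rest (e.map (transOf g))

/-! ### Chord diagrams and the Gaussian parity -/

/-- The setoid on strands given by `SameCycle`; its classes are the orbits of `σ`,
i.e. the components of the closure. -/
def sameCycleSetoid {n : ℕ} (σ : Equiv.Perm (Fin n)) : Setoid (Fin n) :=
  ⟨σ.SameCycle, ⟨Equiv.Perm.SameCycle.refl σ, Equiv.Perm.SameCycle.symm,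
    Equiv.Perm.SameCycle.trans⟩⟩

/-- The rank of a strand in the single cycle of `σ` starting from strand `0`. -/
noncomputable def rankIn {n : ℕ} [NeZero n] (σ : Equiv.Perm (Fin n)) (a : Fin n) : ℕ :=
  ((Function.invFun (fun k : Fin n => (σ ^ (k : ℕ)) 0) a : Fin n) : ℕ)

/-- Coordinates on the core circle of the two endpoints of the chord of the classical
crossing at position `j` (the circle traverses the strands in the cyclic order of `σ`). -/
noncomputable def chordEnds {n : ℕ} [NeZero n] (w : List (Letter n))
    (σ : Equiv.Perm (Fin n)) (j : ℕ) : ℕ × ℕ :=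
  match w[j]? with
  | some (Letter.zeta i) =>
      (rankIn σ ((prefPerm w j)⁻¹ (lo i)) * w.length + j,
       rankIn σ ((prefPerm w j)⁻¹ (hi i)) * w.length + j)
  | _ => (0, 0)

/-- Two chords are linked iff the endpoints of one separate the endpoints of the
other on the core circle. -/
def LinkedChords {n : ℕ} [NeZero n] (w : List (Letter n)) (σ : Equiv.Perm (Fin n))
    (j k : ℕ) : Prop :=
  Xor' (min (chordEnds w σ j).1 (chordEnds w σ j).2 < (chordEnds w σ k).1 ∧
        (chordEnds w σ k).1 < max (chordEnds w σ j).1 (chordEnds w σ j).2)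
       (min (chordEnds w σ j).1 (chordEnds w σ j).2 < (chordEnds w σ k).2 ∧
        (chordEnds w σ k).2 < max (chordEnds w σ j).1 (chordEnds w σ j).2)

/-- The Gaussian parity of the classical crossing at position `j`: the mod-2 number
of chords linked with its chord. Even (`0`) iff linked with evenly many chords. -/
noncomputable def gaussParity {n : ℕ} [NeZero n] (w : List (Letter n))
    (σ : Equiv.Perm (Fin n)) (j : ℕ) : ZMod 2 :=
  (Nat.card {k : ℕ // k < w.length ∧ k ∈ ZetaPos w ∧ k ≠ j ∧ LinkedChords w σ j k} : ZMod 2)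


/-! If `x` lies between `x'` and `x''`, say `x' < x < x''`, the word is
`A ζ₁ M₁ ζ₂ M₂ ζ₃ B` and the two reductions are `A M₁ M₂ ζ₃ B` and `A ζ₁ M₁ M₂ B`.
The two strands of `ζ₁` meet no classical crossing inside `M₁ M₂`, so `ζ₁` can be slid along
them through `M₁ M₂`, arriving as `ζ₃`. To slide it, the crossing of the strands at arbitrary
positions `p < q` is written as the conjugate of `ζ_{q-1}` by a ladder of virtual crossings:
a virtual crossing turns it into the crossing at the swapped positions, and a classical crossing
away from `p` and `q` commutes with it, by the virtual, semivirtual and far commutativity moves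
alone. In every other order, one of `x'`, `x''` is a classical crossing on the strands of `x`
strictly inside the other bigon, which a bigon forbids. -/

section

variable {n : ℕ}

lemma StepOf.append_append {R : List (Letter n) → List (Letter n) → Prop}
    {u v : List (Letter n)} (h : StepOf R u v) (X Y : List (Letter n)) :
    StepOf R (X ++ u ++ Y) (X ++ v ++ Y) := by
  obtain ⟨A, B, r₁, r₂, hr, rfl, rfl⟩ := h
  exact ⟨X ++ A, B ++ Y, r₁, r₂, hr, by simp, by simp⟩

lemma StrongEq.append_append {u v : List (Letter n)} (h : StrongEq u v)
    (X Y : List (Letter n)) : StrongEq (X ++ u ++ Y) (X ++ v ++ Y) := by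
  induction h with
  | rel _ _ h => exact .rel _ _ (h.append_append X Y)
  | refl => exact .refl _
  | symm _ _ _ ih => exact .symm _ _ ih
  | trans _ _ _ _ _ ih ih' => exact .trans _ _ _ ih ih'

lemma StrongEq.append {u u' v v' : List (Letter n)} (h : StrongEq u u') (h' : StrongEq v v') :
    StrongEq (u ++ v) (u' ++ v') := by
  have h₁ : StrongEq (u ++ v) (u' ++ v) := by
    simpa only [List.nil_append] using h.append_append [] v
  have h₂ : StrongEq (u' ++ v) (u' ++ v') := by
    simpa only [List.append_nil] using h'.append_append u' []
  exact .trans _ _ _ h₁ h₂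

def strongCon (n : ℕ) : Con (FreeMonoid (Letter n)) where
  r u v := StrongEq u.toList v.toList
  iseqv := ⟨fun _ => .refl _, fun h => .symm _ _ h, fun h h' => .trans _ _ _ h h'⟩
  mul' h h' := h.append h'

abbrev StrongMonoid (n : ℕ) := (strongCon n).Quotient

def ofWord (w : List (Letter n)) : StrongMonoid n := (strongCon n).mk' (FreeMonoid.ofList w)

lemma ofWord_nil : ofWord ([] : List (Letter n)) = 1 := rfl

lemma ofWord_cons (g : Letter n) (w : List (Letter n)) :
    ofWord (g :: w) = ofWord [g] * ofWord w := rfl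

lemma ofWord_eq_ofWord_iff {u v : List (Letter n)} : ofWord u = ofWord v ↔ StrongEq u v :=
  (strongCon n).eq

lemma ofWord_eq_of_relStrong {r₁ r₂ : List (Letter n)} (h : RelStrong n r₁ r₂) :
    ofWord r₁ = ofWord r₂ :=
  ofWord_eq_ofWord_iff.2 (.rel _ _ ⟨[], [], r₁, r₂, h, by simp, by simp⟩)

/-- Generators indexed by `ℕ`; an out-of-range index gives the junk value `1`. -/
def sTau (k : ℕ) : StrongMonoid n := if h : k < n - 1 then ofWord [.tau ⟨k, h⟩] else 1

def sZeta (k : ℕ) : StrongMonoid n := if h : k < n - 1 then ofWord [.zeta ⟨k, h⟩] else 1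

lemma sTau_val (i : Fin (n - 1)) : sTau i = ofWord [.tau i] := dif_pos i.2

lemma sZeta_val (i : Fin (n - 1)) : sZeta i = ofWord [.zeta i] := dif_pos i.2

lemma sTau_mul_self (k : ℕ) : sTau k * sTau k = (1 : StrongMonoid n) := by
  unfold sTau
  split_ifs with h
  · exact ofWord_eq_of_relStrong (.tt ⟨k, h⟩)
  · exact one_mul 1

lemma commute_sZeta_sTau_self (k : ℕ) : Commute (sZeta k : StrongMonoid n) (sTau k) := by
  unfold sZeta sTau
  split_ifs with h
  · exact ofWord_eq_of_relStrong (.virt ⟨k, h⟩)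
  · exact Commute.one_left 1

lemma commute_sTau_sTau {k l : ℕ} (h : 2 ≤ Nat.dist k l) :
    Commute (sTau k : StrongMonoid n) (sTau l) := by
  unfold sTau
  split_ifs with hk hl hl
  · exact ofWord_eq_of_relStrong (.far_tt ⟨k, hk⟩ ⟨l, hl⟩ h)
  all_goals simp

lemma commute_sZeta_sTau {k l : ℕ} (h : 2 ≤ Nat.dist k l) :
    Commute (sZeta k : StrongMonoid n) (sTau l) := by
  unfold sZeta sTau
  split_ifs with hk hl hl
  · exact ofWord_eq_of_relStrong (.far_zt ⟨k, hk⟩ ⟨l, hl⟩ h)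
  all_goals simp

lemma commute_sZeta_sZeta {k l : ℕ} (h : 2 ≤ Nat.dist k l) :
    Commute (sZeta k : StrongMonoid n) (sZeta l) := by
  unfold sZeta
  split_ifs with hk hl hl
  · exact ofWord_eq_of_relStrong (.far_zz ⟨k, hk⟩ ⟨l, hl⟩ h)
  all_goals simp

lemma sTau_braid {k : ℕ} (hk : k + 1 < n - 1) :
    sTau k * sTau (k + 1) * sTau k = (sTau (k + 1) * sTau k * sTau (k + 1) : StrongMonoid n) := by
  rw [sTau, sTau, dif_pos (by omega), dif_pos hk]
  exact ofWord_eq_of_relStrong (.r3v ⟨k, by omega⟩ ⟨k + 1, hk⟩ rfl)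

lemma sTau_semivirtual {k : ℕ} (hk : k + 1 < n - 1) :
    sTau k * sTau (k + 1) * sZeta k = (sZeta (k + 1) * sTau k * sTau (k + 1) : StrongMonoid n) := by
  simp only [sTau, sZeta, dif_pos hk, dif_pos (show k < n - 1 by omega)]
  exact ofWord_eq_of_relStrong (.semi ⟨k, by omega⟩ ⟨k + 1, hk⟩ rfl)

lemma sTau_mul_sTau_mul (k : ℕ) (x : StrongMonoid n) : sTau k * (sTau k * x) = x := by
  rw [← mul_assoc, sTau_mul_self, one_mul]

lemma mul_sTau_mul_sTau (k : ℕ) (x : StrongMonoid n) : x * sTau k * sTau k = x := by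
  rw [mul_assoc, sTau_mul_self, mul_one]

def tauConj (k : ℕ) : StrongMonoid n ≃* StrongMonoid n where
  toFun x := sTau k * x * sTau k
  invFun x := sTau k * x * sTau k
  left_inv x := by simp only [mul_assoc, sTau_mul_sTau_mul, sTau_mul_self, mul_one]
  right_inv x := by simp only [mul_assoc, sTau_mul_sTau_mul, sTau_mul_self, mul_one]
  map_mul' x y := by
    simp only [mul_assoc]
    rw [← mul_assoc (sTau k) (sTau k), sTau_mul_self, one_mul]

lemma tauConj_apply (k : ℕ) (x : StrongMonoid n) : tauConj k x = sTau k * x * sTau k := rfl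

lemma tauConj_tauConj_self (k : ℕ) (x : StrongMonoid n) : tauConj k (tauConj k x) = x :=
  (tauConj k).left_inv x

lemma tauConj_eq_self {k : ℕ} {x : StrongMonoid n} (h : Commute x (sTau k)) :
    tauConj k x = x := by
  rw [tauConj_apply, ← h.eq, mul_assoc, sTau_mul_self, mul_one]

lemma tauConj_comm {k l : ℕ} (h : 2 ≤ Nat.dist k l) (x : StrongMonoid n) :
    tauConj k (tauConj l x) = tauConj l (tauConj k x) := by
  have hc := commute_sTau_sTau (n := n) h
  simp only [tauConj_apply, mul_assoc]
  rw [hc.left_comm, ← hc.eq]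

structure IsShiftFamily (X : ℕ → StrongMonoid n) : Prop where
  commute_sTau {k l : ℕ} : 2 ≤ Nat.dist k l → Commute (X k) (sTau l)
  commute_sZeta {k l : ℕ} : 2 ≤ Nat.dist k l → Commute (X k) (sZeta l)
  conj_shift {k : ℕ} : k + 1 < n - 1 → tauConj k (tauConj (k + 1) (X k)) = X (k + 1)

lemma tauConj_tauConj_succ_of_mul_eq {k : ℕ} {a b : StrongMonoid n}
    (h : sTau k * sTau (k + 1) * a = b * sTau k * sTau (k + 1)) :
    tauConj k (tauConj (k + 1) a) = b := by
  simp only [tauConj_apply, ← mul_assoc, h, mul_sTau_mul_sTau]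

lemma isShiftFamily_sTau : IsShiftFamily (sTau : ℕ → StrongMonoid n) where
  commute_sTau := commute_sTau_sTau
  commute_sZeta h := (commute_sZeta_sTau (Nat.dist_comm _ _ ▸ h)).symm
  conj_shift hk := tauConj_tauConj_succ_of_mul_eq (sTau_braid hk)

lemma isShiftFamily_sZeta : IsShiftFamily (sZeta : ℕ → StrongMonoid n) where
  commute_sTau := commute_sZeta_sTau
  commute_sZeta := commute_sZeta_sZeta
  conj_shift hk := tauConj_tauConj_succ_of_mul_eq (sTau_semivirtual hk)

/-- `cross p m` is the classical crossing of the strands at positions `p` and `p + m + 1`: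
virtual crossings carry strand `p` next to strand `p + m + 1` and back. -/
def cross : ℕ → ℕ → StrongMonoid n
  | p, 0 => sZeta p
  | p, m + 1 => tauConj p (cross (p + 1) m)

lemma cross_succ_eq_tauConj {p m : ℕ} (hv : p + m + 1 < n - 1) :
    cross p (m + 1) = tauConj (p + m + 1) (cross (n := n) p m) := by
  induction m generalizing p with
  | zero =>
    rw [cross, cross, cross, ← isShiftFamily_sZeta.conj_shift (by omega : p + 1 < n - 1),
      tauConj_tauConj_self]
  | succ m ih =>
    rw [cross, ih (by omega), tauConj_comm (by rw [Nat.dist_comm]; simp [Nat.dist]; omega),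
      ← cross, show p + 1 + m + 1 = p + (m + 1) + 1 by omega]

lemma IsShiftFamily.commute_cross {X : ℕ → StrongMonoid n} (hX : IsShiftFamily X) {p m k : ℕ}
    (hv : p + m < n - 1) (h₁ : k ≠ p) (h₂ : k + 1 ≠ p) (h₃ : k ≠ p + m + 1)
    (h₄ : k + 1 ≠ p + m + 1) : Commute (X k) (cross p m) := by
  induction m using Nat.strong_induction_on generalizing p k with
  | _ m ih =>
  rcases m with _ | m
  · exact hX.commute_sZeta (by simp [Nat.dist]; omega)
  by_cases hk : k = p + 1
  · -- conjugation by `τ_p τ_{p+1}` carries `X p` to `X (p + 1)` and `cross (p + 2) m`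
    -- to `cross p (m + 2)`
    obtain ⟨m, rfl⟩ : ∃ m', m = m' + 1 := ⟨m - 1, by omega⟩
    subst hk
    have hC : Commute (X p) (cross (p + 2) m) :=
      ih m (by omega) (by omega) (by omega) (by omega) (by omega) (by omega)
    rw [cross, cross, ← hX.conj_shift (by omega)]
    exact (hC.map (tauConj (p + 1))).map (tauConj p)
  · rw [cross, ← tauConj_eq_self (hX.commute_sTau (k := k) (l := p) (by simp [Nat.dist]; omega))]
    exact (ih m (by omega) (by omega) (by omega) (by omega) (by omega) (by omega)).map _

def crossAt (p q : ℕ) : StrongMonoid n := cross (min p q) (max p q - min p q - 1)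

lemma crossAt_comm (p q : ℕ) : (crossAt p q : StrongMonoid n) = crossAt q p := by
  rw [crossAt, crossAt, min_comm, max_comm]

lemma crossAt_self_succ (k : ℕ) : (crossAt k (k + 1) : StrongMonoid n) = sZeta k := by
  simp [crossAt, cross]

lemma crossAt_succ_eq_tauConj {r k : ℕ} (h₁ : r ≠ k) (h₂ : r ≠ k + 1) (hk : k < n - 1) :
    crossAt r (k + 1) = tauConj k (crossAt (n := n) r k) := by
  rcases lt_or_gt_of_ne h₁ with hr | hr
  · obtain ⟨m, rfl⟩ : ∃ m, k = r + m + 1 := ⟨k - r - 1, by omega⟩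
    rw [crossAt, crossAt, min_eq_left (by omega), max_eq_right (by omega),
      min_eq_left (by omega), max_eq_right (by omega),
      show r + m + 1 + 1 - r - 1 = m + 1 by omega, show r + m + 1 - r - 1 = m by omega,
      cross_succ_eq_tauConj hk]
  · obtain ⟨m, rfl⟩ : ∃ m, r = k + m + 2 := ⟨r - k - 2, by omega⟩
    rw [crossAt, crossAt, min_eq_right (by omega), max_eq_left (by omega),
      min_eq_right (by omega), max_eq_left (by omega),
      show k + m + 2 - k - 1 = m + 1 by omega, show k + m + 2 - (k + 1) - 1 = m by omega,
      cross, tauConj_tauConj_self]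

lemma IsShiftFamily.commute_crossAt {X : ℕ → StrongMonoid n} (hX : IsShiftFamily X)
    {p q k : ℕ} (hpq : p ≠ q) (hp : p < n) (hq : q < n)
    (h₁ : k ≠ p) (h₂ : k + 1 ≠ p) (h₃ : k ≠ q) (h₄ : k + 1 ≠ q) :
    Commute (X k) (crossAt p q) := by
  rcases lt_or_gt_of_ne hpq with h | h
  · rw [crossAt, min_eq_left h.le, max_eq_right h.le]
    exact hX.commute_cross (by omega) h₁ h₂ (by omega) (by omega)
  · rw [crossAt, min_eq_right h.le, max_eq_left h.le]
    exact hX.commute_cross (by omega) h₃ h₄ (by omega) (by omega)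

lemma crossAt_swap {p q k : ℕ} (hpq : p ≠ q) (hp : p < n) (hq : q < n) (hk : k < n - 1) :
    crossAt (Equiv.swap k (k + 1) p) (Equiv.swap k (k + 1) q) =
      tauConj k (crossAt (n := n) p q) := by
  have key : ∀ r s, s = k ∨ s = k + 1 → r ≠ k → r ≠ k + 1 →
      crossAt (Equiv.swap k (k + 1) r) (Equiv.swap k (k + 1) s) =
        tauConj k (crossAt (n := n) r s) := by
    rintro r s (rfl | rfl) h₁ h₂
    · rw [Equiv.swap_apply_left, Equiv.swap_apply_of_ne_of_ne h₁ h₂,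
        crossAt_succ_eq_tauConj h₁ h₂ hk]
    · rw [Equiv.swap_apply_right, Equiv.swap_apply_of_ne_of_ne h₁ h₂,
        crossAt_succ_eq_tauConj h₁ h₂ hk, tauConj_tauConj_self]
  by_cases hpk : p = k ∨ p = k + 1
  · by_cases hqk : q = k ∨ q = k + 1
    · have hkk : crossAt k (k + 1) = tauConj k (crossAt (n := n) k (k + 1)) := by
        rw [crossAt_self_succ, tauConj_eq_self (commute_sZeta_sTau_self k)]
      obtain ⟨rfl, rfl⟩ | ⟨rfl, rfl⟩ : (p = k ∧ q = k + 1) ∨ (p = k + 1 ∧ q = k) := by omega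
      · rw [Equiv.swap_apply_left, Equiv.swap_apply_right, crossAt_comm]
        exact hkk
      · rw [Equiv.swap_apply_left, Equiv.swap_apply_right, crossAt_comm (_ + 1)]
        exact hkk
    · rw [not_or] at hqk
      rw [crossAt_comm, key q p hpk hqk.1 hqk.2, crossAt_comm]
  · rw [not_or] at hpk
    by_cases hqk : q = k ∨ q = k + 1
    · exact key p q hqk hpk.1 hpk.2
    · rw [not_or] at hqk
      rw [Equiv.swap_apply_of_ne_of_ne hpk.1 hpk.2, Equiv.swap_apply_of_ne_of_ne hqk.1 hqk.2,
        tauConj_eq_self (isShiftFamily_sTau.commute_crossAt hpq hp hq (by omega) (by omega)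
          (by omega) (by omega)).symm]

lemma permOf_nil : permOf ([] : List (Letter n)) = 1 := rfl

lemma permOf_cons (g : Letter n) (w : List (Letter n)) :
    permOf (g :: w) = permOf w * transOf g := by
  simp [permOf]

lemma permOf_append (u v : List (Letter n)) : permOf (u ++ v) = permOf v * permOf u := by
  simp [permOf]

lemma transOf_zeta_apply_of_not_mem {i : Fin (n - 1)} {p : Fin n} (h : p ∉ s(lo i, hi i)) :
    transOf (.zeta i) p = p := by
  rw [Sym2.mem_iff, not_or] at h
  exact Equiv.swap_apply_of_ne_of_ne h.1 h.2

lemma val_transOf_tau (i : Fin (n - 1)) (p : Fin n) :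
    (transOf (.tau i) p : ℕ) = Equiv.swap (i : ℕ) (i + 1) p :=
  (Fin.val_injective.swap_apply (lo i) (hi i) p).symm

/-- The strand at position `p` at the top of `N` passes no classical crossing of `N`. -/
def AvoidsStrand (N : List (Letter n)) (p : Fin n) : Prop :=
  ∀ j (i : Fin (n - 1)), N[j]? = some (.zeta i) → permOf (N.take j) p ∉ s(lo i, hi i)

lemma AvoidsStrand.of_cons {g : Letter n} {N : List (Letter n)} {p : Fin n}
    (h : AvoidsStrand (g :: N) p) : AvoidsStrand N (transOf g p) := by
  intro j i hj
  simpa [permOf_cons] using h (j + 1) i hj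

lemma AvoidsStrand.not_mem_of_cons_zeta {i : Fin (n - 1)} {N : List (Letter n)} {p : Fin n}
    (h : AvoidsStrand (.zeta i :: N) p) : p ∉ s(lo i, hi i) :=
  h 0 i rfl

lemma AvoidsStrand.append {M M' : List (Letter n)} {p : Fin n} (h : AvoidsStrand M p)
    (h' : AvoidsStrand M' (permOf M p)) : AvoidsStrand (M ++ M') p := by
  intro j i hj
  rcases lt_or_ge j M.length with hjM | hjM
  · rw [List.getElem?_append_left hjM] at hj
    rw [List.take_append_of_le_length hjM.le]
    exact h j i hj
  · rw [List.getElem?_append_right hjM] at hj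
    rw [List.take_append, List.take_of_length_le hjM, permOf_append]
    exact h' _ i hj

lemma ofWord_singleton_mul_crossAt (g : Letter n) {p q : Fin n} (hpq : p ≠ q)
    (hg : ∀ i, g = .zeta i → p ∉ s(lo i, hi i) ∧ q ∉ s(lo i, hi i)) :
    ofWord [g] * crossAt (transOf g p) (transOf g q) = crossAt p q * ofWord [g] := by
  cases g with
  | tau i =>
    rw [val_transOf_tau, val_transOf_tau, ← sTau_val,
      crossAt_swap (Fin.val_injective.ne hpq) p.2 q.2 i.2, tauConj_apply, ← mul_assoc,
      ← mul_assoc, sTau_mul_self, one_mul]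
  | zeta i =>
    obtain ⟨hp, hq⟩ := hg i rfl
    rw [transOf_zeta_apply_of_not_mem hp, transOf_zeta_apply_of_not_mem hq, ← sZeta_val]
    simp only [Sym2.mem_iff, not_or, Fin.ext_iff] at hp hq
    exact isShiftFamily_sZeta.commute_crossAt (Fin.val_injective.ne hpq) p.2 q.2
      (Ne.symm hp.1) (Ne.symm hp.2) (Ne.symm hq.1) (Ne.symm hq.2)

lemma ofWord_mul_crossAt (N : List (Letter n)) {p q : Fin n} (hpq : p ≠ q)
    (hp : AvoidsStrand N p) (hq : AvoidsStrand N q) :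
    ofWord N * crossAt (permOf N p) (permOf N q) = crossAt p q * ofWord N := by
  induction N generalizing p q with
  | nil => simp [permOf_nil, ofWord_nil]
  | cons g N ih =>
    rw [ofWord_cons, permOf_cons, Equiv.Perm.mul_apply, Equiv.Perm.mul_apply, mul_assoc,
      ih ((transOf g).injective.ne hpq) hp.of_cons hq.of_cons, ← mul_assoc,
      ofWord_singleton_mul_crossAt g hpq, mul_assoc]
    rintro i rfl
    exact ⟨hp.not_mem_of_cons_zeta, hq.not_mem_of_cons_zeta⟩

lemma crossAt_eq_sZeta {p q : Fin n} {i : Fin (n - 1)} (h : s(p, q) = s(lo i, hi i)) :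
    crossAt p q = sZeta (n := n) i := by
  rcases Sym2.eq_iff.1 h with ⟨rfl, rfl⟩ | ⟨rfl, rfl⟩
  · exact crossAt_self_succ _
  · rw [crossAt_comm]; exact crossAt_self_succ _

/-- `ζ_i N ζ_i'` is a bigon: the two strands leaving `ζ_i` pass no classical crossing of `N`
and meet again at `ζ_i'`. -/
structure IsBigonBody (N : List (Letter n)) (i i' : Fin (n - 1)) : Prop where
  avoids_lo : AvoidsStrand N (lo i)
  avoids_hi : AvoidsStrand N (hi i)
  map_eq : s(lo i, hi i).map (permOf N) = s(lo i', hi i')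

lemma IsBigonBody.avoidsStrand {N : List (Letter n)} {i i' : Fin (n - 1)}
    (h : IsBigonBody N i i') {p : Fin n} (hp : p ∈ s(lo i, hi i)) : AvoidsStrand N p := by
  rcases Sym2.mem_iff.1 hp with rfl | rfl
  exacts [h.avoids_lo, h.avoids_hi]

lemma IsBigonBody.append {M M' : List (Letter n)} {i i' i'' : Fin (n - 1)}
    (h : IsBigonBody M i i') (h' : IsBigonBody M' i' i'') : IsBigonBody (M ++ M') i i'' where
  avoids_lo := h.avoids_lo.append <| h'.avoidsStrand <| h.map_eq ▸ Sym2.mem_map.2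
    ⟨_, Sym2.mem_mk_left _ _, rfl⟩
  avoids_hi := h.avoids_hi.append <| h'.avoidsStrand <| h.map_eq ▸ Sym2.mem_map.2
    ⟨_, Sym2.mem_mk_right _ _, rfl⟩
  map_eq := by rw [permOf_append, Equiv.Perm.coe_mul, ← Sym2.map_map, h.map_eq, h'.map_eq]

lemma IsBigonBody.strongEq {N : List (Letter n)} {i i' : Fin (n - 1)} (h : IsBigonBody N i i') :
    StrongEq (N ++ [.zeta i']) (.zeta i :: N) := by
  have hpq : lo i ≠ hi i := fun e => by simpa [lo, hi] using congrArg Fin.val e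
  have hslide := ofWord_mul_crossAt N hpq h.avoids_lo h.avoids_hi
  rw [crossAt_eq_sZeta (by rw [← Sym2.map_mk, h.map_eq]), crossAt_eq_sZeta rfl, sZeta_val,
    sZeta_val] at hslide
  exact ofWord_eq_ofWord_iff.1 hslide

lemma prefPerm_append_length (A L : List (Letter n)) (j : ℕ) :
    prefPerm (A ++ L) (A.length + j) = permOf (L.take j) * permOf A := by
  rw [prefPerm, List.take_length_add_append, ← permOf, permOf_append]

lemma getElem?_append_length_add {α : Type*} (A L : List α) (j : ℕ) :
    (A ++ L)[A.length + j]? = L[j]? := by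
  rw [List.getElem?_append_right (by omega), Nat.add_sub_cancel_left]

lemma strandsAt_of_getElem? {w : List (Letter n)} {j : ℕ} {g : Letter n} (h : w[j]? = some g) :
    strandsAt w j = some s((prefPerm w j)⁻¹ (lo g.idx), (prefPerm w j)⁻¹ (hi g.idx)) := by
  simp [strandsAt, h]

lemma mem_pair_perm_inv_iff {α : Type*} (σ : Equiv.Perm α) {x a b : α} :
    x ∈ s(σ⁻¹ a, σ⁻¹ b) ↔ σ x ∈ s(a, b) := by
  simp [Sym2.mem_iff, Equiv.eq_symm_apply]

lemma IsBigon.isBigonBody {A M R : List (Letter n)} {i i' : Fin (n - 1)}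
    (h : IsBigon (A ++ .zeta i :: (M ++ .zeta i' :: R)) A.length (A.length + M.length + 1)) :
    IsBigonBody M i i' := by
  set W := A ++ .zeta i :: (M ++ .zeta i' :: R)
  obtain ⟨-, -, -, hab, hbetween⟩ := h
  have hperm : ∀ j ≤ M.length,
      prefPerm W (A.length + (j + 1)) = permOf (M.take j) * transOf (.zeta i) * permOf A := by
    intro j hj
    rw [prefPerm_append_length, List.take_succ_cons, permOf_cons,
      List.take_append_of_le_length hj]
  have hsa : strandsAt W A.length =
      some s((permOf A)⁻¹ (lo i), (permOf A)⁻¹ (hi i)) := by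
    rw [strandsAt_of_getElem? (g := .zeta i) (by simp [W]), prefPerm, List.take_left' rfl]
    rfl
  have havoid : ∀ y ∈ s(lo i, hi i), AvoidsStrand M (transOf (.zeta i) y) := by
    intro y hy j i'' hj
    have hjM : j < M.length := (List.getElem?_eq_some_iff.1 hj).1
    have hWk : W[A.length + (j + 1)]? = some (.zeta i'') := by
      rw [getElem?_append_length_add, List.getElem?_cons_succ, List.getElem?_append_left hjM, hj]
    have hk := hbetween _ (by omega) (by omega) ⟨i'', hWk⟩ _ _ hsa (strandsAt_of_getElem? hWk)
      ((permOf A)⁻¹ y) (by simpa [mem_pair_perm_inv_iff] using hy)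
    rw [mem_pair_perm_inv_iff, hperm j hjM.le] at hk
    simpa [Letter.idx] using hk
  refine ⟨by simpa [transOf, sPerm, Letter.idx] using havoid (hi i) (Sym2.mem_mk_right _ _),
    by simpa [transOf, sPerm, Letter.idx] using havoid (lo i) (Sym2.mem_mk_left _ _), ?_⟩
  have hsb : strandsAt W (A.length + M.length + 1) = some s(
      (prefPerm W (A.length + (M.length + 1)))⁻¹ (lo i'),
      (prefPerm W (A.length + (M.length + 1)))⁻¹ (hi i')) :=
    strandsAt_of_getElem? (g := .zeta i') (by
      rw [add_assoc, getElem?_append_length_add, List.getElem?_cons_succ]; simp)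
  rw [hsa, hsb, Option.some_inj, hperm _ le_rfl, List.take_length] at hab
  have := congrArg (Sym2.map (permOf M * transOf (.zeta i) * permOf A)) hab
  rw [Sym2.map_mk, Sym2.eq_swap]
  simpa [transOf, sPerm, Letter.idx] using this

lemma exists_eq_append_cons_of_getElem? {α : Type*} {l : List α} {a : ℕ} {g : α}
    (h : l[a]? = some g) : ∃ A L, l = A ++ g :: L ∧ A.length = a := by
  obtain ⟨ha, rfl⟩ := List.getElem?_eq_some_iff.1 h
  exact ⟨l.take a, l.drop (a + 1), by rw [← List.drop_eq_getElem_cons, List.take_append_drop],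
    by simp; omega⟩

lemma IsBigon.exists_eq_append {w : List (Letter n)} {a b : ℕ} (h : IsBigon w a b) :
    ∃ A i M i' R, w = A ++ .zeta i :: (M ++ .zeta i' :: R) ∧ A.length = a ∧
      A.length + M.length + 1 = b := by
  obtain ⟨hab, ⟨i, ha⟩, ⟨i', hb⟩, -⟩ := h
  obtain ⟨A, L, rfl, rfl⟩ := exists_eq_append_cons_of_getElem? ha
  obtain ⟨M, R, rfl, hM⟩ := exists_eq_append_cons_of_getElem? (l := L) (a := b - A.length - 1)
    (by rwa [show b = A.length + (b - A.length - 1 + 1) by omega, getElem?_append_length_add,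
      List.getElem?_cons_succ] at hb)
  exact ⟨A, i, M, i', R, rfl, rfl, by omega⟩

lemma delete2_append_cons (A M R : List (Letter n)) (g g' : Letter n) {a b : ℕ}
    (ha : a = A.length) (hb : b = A.length + M.length + 1) :
    delete2 (A ++ g :: (M ++ g' :: R)) a b = A ++ (M ++ R) := by
  subst ha hb
  rw [delete2, max_eq_right (by omega), min_eq_left (by omega),
    show A ++ g :: (M ++ g' :: R) = (A ++ g :: M) ++ g' :: R by simp,
    List.eraseIdx_append_of_length_le (by simp; omega),
    show A.length + M.length + 1 - (A ++ g :: M).length = 0 by simp,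
    List.eraseIdx_cons_zero, List.append_assoc, List.eraseIdx_append_of_length_le le_rfl,
    Nat.sub_self, List.cons_append, List.eraseIdx_cons_zero]

lemma delete2_comm (w : List (Letter n)) (x y : ℕ) : delete2 w x y = delete2 w y x := by
  rw [delete2, delete2, max_comm, min_comm]

lemma IsBigon.strandsAt_ne {w : List (Letter n)} {a b k : ℕ} (h : IsBigon w a b)
    (hak : a < k) (hkb : k < b) (hk : k ∈ ZetaPos w) : strandsAt w k ≠ strandsAt w a := by
  obtain ⟨-, ⟨i, ha⟩, -, -, hbetween⟩ := h
  intro heq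
  have hsa := strandsAt_of_getElem? ha
  exact hbetween k hak hkb hk _ _ hsa (heq.trans hsa) _ (Sym2.mem_mk_left _ _)
    (Sym2.mem_mk_left _ _)

lemma IsBigon.not_isBigon_of_lt_right {w : List (Letter n)} {a b c : ℕ} (h : IsBigon w a c)
    (hbc : b < c) : ¬ IsBigon w a b := by
  rintro ⟨hab, -, hb, hstr, -⟩
  exact h.strandsAt_ne hab hbc hb hstr.symm

lemma IsBigon.not_isBigon_of_lt_left {w : List (Letter n)} {a b c : ℕ} (h : IsBigon w a c)
    (hab : a < b) : ¬ IsBigon w b c := by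
  rintro ⟨hbc, hb, -, hstr, -⟩
  exact h.strandsAt_ne hab hbc hb (hstr.trans h.2.2.2.1.symm)

lemma IsBigon.strongEq_delete2 {w : List (Letter n)} {a b c : ℕ} (h₁ : IsBigon w a b)
    (h₂ : IsBigon w b c) : StrongEq (delete2 w a b) (delete2 w b c) := by
  obtain ⟨A, i₁, M₁, i₂, R, rfl, rfl, rfl⟩ := h₁.exists_eq_append
  obtain ⟨A', i₂', M₂, i₃, B, hw, hA', rfl⟩ := h₂.exists_eq_append
  obtain ⟨rfl, hR⟩ := List.append_inj (s₁ := A ++ .zeta i₁ :: M₁) (by simpa using hw)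
    (by simp [hA']; omega)
  obtain ⟨⟨⟩, rfl⟩ := List.cons_eq_cons.1 hR
  have hw : A ++ .zeta i₁ :: (M₁ ++ .zeta i₂ :: (M₂ ++ .zeta i₃ :: B)) =
      (A ++ .zeta i₁ :: M₁) ++ .zeta i₂ :: (M₂ ++ .zeta i₃ :: B) := by simp
  have hb : A.length + M₁.length + 1 = (A ++ .zeta i₁ :: M₁).length := by simp; omega
  rw [hw, hb] at h₂
  rw [delete2_append_cons _ _ _ _ _ rfl rfl, hw, delete2_append_cons _ _ _ _ _ hb rfl]
  simpa using (h₁.isBigonBody.append h₂.isBigonBody).strongEq.append_append A B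

end

theorem bigons_sharing_vertex_general (n : ℕ) (w : List (Letter n)) (x x' x'' : ℕ)
    (h1 : IsBigon w (min x x') (max x x'))
    (h2 : IsBigon w (min x x'') (max x x'')) :
    StrongEq (delete2 w x x') (delete2 w x x'') := by
  rcases eq_or_ne x' x'' with rfl | hne
  · exact .refl _
  wlog hlt : x' < x'' generalizing x' x''
  · exact .symm _ _ (this x'' x' h2 h1 hne.symm (by omega))
  have hx' : x ≠ x' := by rintro rfl; simpa using h1.1
  have hx'' : x ≠ x'' := by rintro rfl; simpa using h2.1
  rcases lt_or_gt_of_ne hx' with hxx' | hxx'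
  · rw [min_eq_left hxx'.le, max_eq_right hxx'.le] at h1
    rw [min_eq_left (by omega), max_eq_right (by omega)] at h2
    exact absurd h1 (h2.not_isBigon_of_lt_right hlt)
  rw [min_eq_right hxx'.le, max_eq_left hxx'.le] at h1
  rcases lt_or_gt_of_ne hx'' with hxx'' | hxx''
  · rw [min_eq_left hxx''.le, max_eq_right hxx''.le] at h2
    rw [delete2_comm]
    exact h1.strongEq_delete2 h2
  · rw [min_eq_right hxx''.le, max_eq_left hxx''.le] at h2
    exact absurd h2 (h1.not_isBigon_of_lt_left hlt)

/-- if `x, x'` form a bigon and `x, x''` form a bigon (sharing the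
crossing `x`), then the two bigon reductions give strongly equivalent words. -/
theorem bigons_sharing_vertex (n : ℕ) (w : List (Letter n)) (x x' x'' : ℕ)
    (hne : x' ≠ x'')
    (h1 : IsBigon w (min x x') (max x x'))
    (h2 : IsBigon w (min x x'') (max x x'')) :
    StrongEq (delete2 w x x') (delete2 w x x'') :=
  bigons_sharing_vertex_general n w x x' x'' h1 h2

end OneTermBracket
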